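/- arXiv:2211.16462 — 2 statements merged into one kernel-verified Lean document; each statement's English description precedes it below -/
import Mathlib

section
/- Let $S_1,\ldots,S_{n+1}$ be real-valued random variables on a probability space whose joint law is exchangeable, and suppose that almost surely the values $S_1,\ldots,S_{n+1}$ are pairwise distinct. Define the rank of $S_{n+1}$ as $R = \#\{ j \in \{1,\ldots,n+1\} : S_j \leq S_{n+1} \}$. Then $R$ is uniformly distributed on $\{1,2,\ldots,n+1\}$: for every $i \in \{1,\ldots,n+1\}$, $P(R = i) = \frac{1}{n+1}$. -/
/-! Swapping indices `k` and `n + 1` shows, by exchangeability, that every index has the same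
probability `p` of holding rank `i`. When the values are distinct exactly one index holds rank
`i`, so these `n + 1` events partition the sample space up to a null set and `(n + 1) p = 1`. -/

open MeasureTheory Finset Function
open scoped ENNReal

section Rank

variable {ι α : Type*} [Fintype ι] [LinearOrder α]

noncomputable def rankOf (v : ι → α) (k : ι) : ℕ := #{j | v j ≤ v k}

lemma rankOf_lt_rankOf {v : ι → α} {k k' : ι} (h : v k < v k') : rankOf v k < rankOf v k' :=
  card_lt_card <| (ssubset_iff_of_subset (monotone_filter_right _ fun _ _ hj => hj.trans h.le)).2
    ⟨k', by simp, by simpa using h⟩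

lemma rankOf_injective {v : ι → α} (hv : Injective v) : Injective (rankOf v) := by
  intro k k' h
  by_contra hne
  rcases (hv.ne hne).lt_or_gt with hlt | hlt
  · exact (rankOf_lt_rankOf hlt).ne h
  · exact (rankOf_lt_rankOf hlt).ne' h

lemma rankOf_mem_Icc (v : ι → α) (k : ι) : rankOf v k ∈ Icc 1 (Fintype.card ι) :=
  mem_Icc.2 ⟨card_pos.2 ⟨k, by simp⟩, card_le_univ _⟩

lemma image_rankOf_univ {v : ι → α} (hv : Injective v) :
    univ.image (rankOf v) = Icc 1 (Fintype.card ι) :=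
  eq_of_subset_of_card_le (image_subset_iff.2 fun k _ => rankOf_mem_Icc v k)
    (by simp [card_image_of_injective _ (rankOf_injective hv)])

lemma exists_rankOf_eq {v : ι → α} (hv : Injective v) {i : ℕ}
    (hi : i ∈ Icc 1 (Fintype.card ι)) : ∃ k, rankOf v k = i := by
  rw [← image_rankOf_univ hv] at hi
  simpa using hi

lemma rankOf_comp_perm (v : ι → α) (σ : Equiv.Perm ι) (k : ι) :
    rankOf (v ∘ σ) k = rankOf v (σ k) :=
  card_equiv σ (by simp)

lemma measurable_rankOf [TopologicalSpace α] [MeasurableSpace α] [OpensMeasurableSpace α]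
    [OrderClosedTopology α] [SecondCountableTopology α] (k : ι) :
    Measurable fun v : ι → α => rankOf v k := by
  simp_rw [rankOf, card_filter]
  exact Finset.measurable_sum _ fun j _ => Measurable.ite
    (measurableSet_le (measurable_pi_apply j) (measurable_pi_apply k)) measurable_const
    measurable_const

end Rank

namespace ProbabilityTheory

variable {Ω ι α : Type*} [MeasurableSpace Ω] [Fintype ι] [LinearOrder α] [MeasurableSpace α]

def Exchangeable (P : Measure Ω) (S : ι → Ω → α) : Prop :=
  ∀ σ : Equiv.Perm ι, P.map (fun ω i => S (σ i) ω) = P.map (fun ω i => S i ω)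

variable [TopologicalSpace α] [OpensMeasurableSpace α] [OrderClosedTopology α]
  [SecondCountableTopology α] {P : Measure Ω} {S : ι → Ω → α}

lemma Exchangeable.measure_rankOf_eq (hS : Exchangeable P S) (hmeas : ∀ i, Measurable (S i))
    (k k' : ι) (i : ℕ) :
    P {ω | rankOf (fun j => S j ω) k = i} = P {ω | rankOf (fun j => S j ω) k' = i} := by
  have hB : MeasurableSet {v : ι → α | rankOf v k' = i} :=
    measurable_rankOf k' (measurableSet_singleton i)
  classical
  set σ := Equiv.swap k' k
  calc P {ω | rankOf (fun j => S j ω) k = i}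
      = P.map (fun ω j => S (σ j) ω) {v | rankOf v k' = i} := by
        rw [Measure.map_apply (measurable_pi_lambda _ fun j => hmeas (σ j)) hB]
        congr 1
        ext ω
        show _ ↔ rankOf ((fun j => S j ω) ∘ σ) k' = i
        rw [rankOf_comp_perm, Equiv.swap_apply_left]
        rfl
    _ = P {ω | rankOf (fun j => S j ω) k' = i} := by
        rw [hS σ, Measure.map_apply (measurable_pi_lambda _ hmeas) hB]
        rfl

lemma sum_measure_rankOf_eq_one [IsProbabilityMeasure P] (hmeas : ∀ i, Measurable (S i))
    (hdist : ∀ᵐ ω ∂P, Injective fun j => S j ω) {i : ℕ} (hi : i ∈ Icc 1 (Fintype.card ι)) :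
    ∑ k, P {ω | rankOf (fun j => S j ω) k = i} = 1 := by
  set A : ι → Set Ω := fun k => {ω | rankOf (fun j => S j ω) k = i}
  have hA : ∀ k, MeasurableSet (A k) := fun k =>
    (measurable_rankOf k).comp (measurable_pi_lambda _ hmeas) (measurableSet_singleton i)
  have hdisj : Pairwise (AEDisjoint P on A) := fun k k' hne =>
    measure_mono_null (fun ω ⟨hk, hk'⟩ => show ¬Injective fun j => S j ω from
      fun hinj => hne (rankOf_injective hinj (hk.trans hk'.symm))) (ae_iff.1 hdist)
  have hcover : (⋃ k, A k) =ᵐ[P] (Set.univ : Set Ω) :=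
    ae_eq_univ.2 <| measure_mono_null (fun ω hω => show ¬Injective fun j => S j ω from
      fun hinj => hω (Set.mem_iUnion.2 (exists_rankOf_eq hinj hi))) (ae_iff.1 hdist)
  calc ∑ k, P (A k) = P (⋃ k, A k) :=
        ((measure_iUnion₀ hdisj fun k => (hA k).nullMeasurableSet).trans (tsum_fintype _)).symm
    _ = 1 := by rw [measure_congr hcover, measure_univ]

theorem Exchangeable.measure_rankOf_eq_one_div_card [IsProbabilityMeasure P]
    (hS : Exchangeable P S) (hmeas : ∀ i, Measurable (S i))
    (hdist : ∀ᵐ ω ∂P, Injective fun j => S j ω) {i : ℕ} (hi : i ∈ Icc 1 (Fintype.card ι))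
    (k : ι) : P {ω | rankOf (fun j => S j ω) k = i} = 1 / Fintype.card ι := by
  have hsum := sum_measure_rankOf_eq_one hmeas hdist hi
  rw [sum_congr rfl fun k' _ => hS.measure_rankOf_eq hmeas k' k i, sum_const, card_univ,
    nsmul_eq_mul] at hsum
  have hcard : (Fintype.card ι : ℝ≥0∞) ≠ 0 := by
    simpa using Nat.one_le_iff_ne_zero.1 ((mem_Icc.1 hi).1.trans (mem_Icc.1 hi).2)
  rw [ENNReal.eq_div_iff hcard (ENNReal.natCast_ne_top _), hsum]

end ProbabilityTheory

/-- For an exchangeable sequence `S 0, …, S n` (that is, `n+1` real random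
variables whose joint law is invariant under every permutation of the indices) that is
almost surely pairwise distinct, the rank
`R = #{ j : S j ≤ S (last) }` of the last variable is uniform on `{1, …, n+1}`. -/
theorem rank_uniform_of_exchangeable
    {Ω : Type*} [MeasurableSpace Ω] (P : Measure Ω) [IsProbabilityMeasure P]
    (n : ℕ) (S : Fin (n + 1) → Ω → ℝ) (hmeas : ∀ i, Measurable (S i))
    (hexch : ∀ σ : Equiv.Perm (Fin (n + 1)),
      Measure.map (fun ω => fun i => S (σ i) ω) P = Measure.map (fun ω => fun i => S i ω) P)
    (hdist : ∀ᵐ ω ∂P, ∀ i j : Fin (n + 1), i ≠ j → S i ω ≠ S j ω) :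
    ∀ i : ℕ, 1 ≤ i → i ≤ n + 1 →
      P {ω | (Finset.univ.filter
          (fun j : Fin (n + 1) => S j ω ≤ S (Fin.last n) ω)).card = i}
        = 1 / (n + 1 : ℝ≥0∞) := by
  intro i h1 h2
  have hinj : ∀ᵐ ω ∂P, Injective fun j => S j ω :=
    hdist.mono fun ω h a b => not_imp_not.1 (h a b)
  have hi : i ∈ Icc 1 (Fintype.card (Fin (n + 1))) := by simpa using ⟨h1, h2⟩
  simpa [rankOf] using
    ProbabilityTheory.Exchangeable.measure_rankOf_eq_one_div_card hexch hmeas hinj hi (Fin.last n)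
end

section
/- Let $S_1,\ldots,S_{n+1}$ be real-valued random variables on a probability space whose joint law is exchangeable, and suppose that almost surely the values $S_1,\ldots,S_{n+1}$ are pairwise distinct. For $1 \leq i \leq n$, let $S_{(i)}$ denote the $i$-th smallest value among the first $n$ variables $S_1,\ldots,S_n$. Then for every $i \in \{1,\ldots,n\}$, $P(S_{n+1} \leq S_{(i)}) = \frac{i}{n+1}$. -/
/-!
Let the rank of `S j` be the number of `S k` strictly below it. Then `S (last) ≤ S_(i)` says
exactly that fewer than `i` of the first `n` values lie below `S (last)`, i.e. that the rank of
`S (last)` is `< i`. Almost surely the values are distinct, so the ranks are a permutation of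
`0, …, n` and exactly `i` of the events `{rank (S j) < i}` occur; by exchangeability these
`n + 1` events have the same probability, which is therefore `i / (n + 1)`.
-/

open MeasureTheory
open scoped ENNReal

/-- The `i`-th order statistic (1-based) of the values `v 0, …, v (n-1)`: the `i`-th
smallest value, expressed as the least `x` such that at least `i` of the values are `≤ x`. -/
noncomputable def orderStat (n : ℕ) (v : Fin n → ℝ) (i : ℕ) : ℝ :=
  sInf {x : ℝ | i ≤ (Finset.univ.filter (fun j : Fin n => v j ≤ x)).card}

open Finset

section Rank

variable {ι α : Type*} [Fintype ι] [LinearOrder α]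

def rank (v : ι → α) (j : ι) : ℕ := #{k | v k < v j}

theorem rank_comp_equiv {κ : Type*} [Fintype κ] (v : ι → α) (σ : κ ≃ ι) (j : κ) :
    rank (v ∘ σ) j = rank v (σ j) := by
  simp only [rank, Function.comp_apply]
  exact card_equiv σ (by simp)

theorem rank_lt_rank {v : ι → α} {a b : ι} (hab : v a < v b) : rank v a < rank v b := by
  refine card_lt_card ⟨monotone_filter_right _ fun _ _ hk => hk.trans hab, fun hsub => ?_⟩
  exact lt_irrefl _ (mem_filter.mp (hsub (mem_filter.mpr ⟨mem_univ a, hab⟩))).2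

theorem rank_injective {v : ι → α} (hv : v.Injective) : (rank v).Injective := by
  intro a b h
  rcases lt_trichotomy (v a) (v b) with hlt | heq | hgt
  · exact absurd h (rank_lt_rank hlt).ne
  · exact hv heq
  · exact absurd h (rank_lt_rank hgt).ne'

theorem rank_lt_card (v : ι → α) (j : ι) : rank v j < Fintype.card ι :=
  card_lt_card (filter_ssubset.mpr ⟨j, mem_univ j, lt_irrefl _⟩)

theorem image_univ_rank {v : ι → α} (hv : v.Injective) :
    univ.image (rank v) = range (Fintype.card ι) :=
  eq_of_subset_of_card_le (fun _ hm => by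
      obtain ⟨j, -, rfl⟩ := mem_image.mp hm
      exact mem_range.mpr (rank_lt_card v j))
    (by rw [card_image_of_injective _ (rank_injective hv), card_range, card_univ])

theorem card_filter_rank_lt {v : ι → α} (hv : v.Injective) {i : ℕ} (hi : i ≤ Fintype.card ι) :
    #{j | rank v j < i} = i := by
  have : (range (Fintype.card ι)).filter (· < i) = range i := by
    ext m; simp only [mem_filter, mem_range]; omega
  rw [← card_image_of_injective _ (rank_injective hv), ← filter_image (p := (· < i)),
    image_univ_rank hv, this, card_range]

theorem rank_last {n : ℕ} (v : Fin (n + 1) → α) :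
    rank v (Fin.last n) = #{j : Fin n | v j.castSucc < v (Fin.last n)} := by
  rw [rank, card_filter, card_filter, Fin.sum_univ_castSucc]
  simp

end Rank

theorem le_orderStat_iff {n i : ℕ} (w : Fin n → ℝ) (t : ℝ) (hi₁ : 1 ≤ i) (hi₂ : i ≤ n) :
    t ≤ orderStat n w i ↔ #{j | w j < t} < i := by
  obtain ⟨lo, hlo⟩ := (Set.finite_range w).bddBelow
  obtain ⟨up, hup⟩ := (Set.finite_range w).bddAbove
  have hne : {x : ℝ | i ≤ #{j | w j ≤ x}}.Nonempty :=
    ⟨up, by simpa [filter_true_of_mem fun j _ => hup (Set.mem_range_self j)] using hi₂⟩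
  have hbdd : BddBelow {x : ℝ | i ≤ #{j | w j ≤ x}} := by
    refine ⟨lo, fun x hx => ?_⟩
    obtain ⟨j, hj⟩ := card_pos.mp (hi₁.trans hx)
    exact (hlo (Set.mem_range_self j)).trans (mem_filter.mp hj).2
  rw [orderStat, le_csInf_iff hbdd hne]
  constructor
  · intro h
    by_contra! hcount
    -- the largest value below `t` already has at least `i` values at or below it
    obtain ⟨m, hm, hmax⟩ := exists_max_image _ w (card_pos.mp (hi₁.trans hcount))
    have hsub : univ.filter (w · < t) ⊆ univ.filter (w · ≤ w m) :=
      monotone_filter_right _ fun j hj hjt => hmax j (mem_filter.mpr ⟨hj, hjt⟩)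
    exact (h (w m) (hcount.trans (card_le_card hsub))).not_gt (mem_filter.mp hm).2
  · intro hcount x hx
    by_contra! hxt
    have hsub : univ.filter (w · ≤ x) ⊆ univ.filter (w · < t) :=
      monotone_filter_right _ fun _ _ (hj : _ ≤ x) => hj.trans_lt hxt
    exact (hx.trans (card_le_card hsub)).not_gt hcount

theorem sum_measure_eq_of_ae_card_eq {Ω ι : Type*} [MeasurableSpace Ω] [Fintype ι]
    {P : Measure Ω} [IsProbabilityMeasure P] {p : ι → Ω → Prop} [∀ j ω, Decidable (p j ω)]
    (hp : ∀ j, MeasurableSet {ω | p j ω}) {c : ℕ} (h : ∀ᵐ ω ∂P, #{j | p j ω} = c) :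
    ∑ j, P {ω | p j ω} = c := by
  calc ∑ j, P {ω | p j ω} = ∑ j, ∫⁻ ω, {ω | p j ω}.indicator 1 ω ∂P := by simp [hp]
    _ = ∫⁻ ω, ∑ j, {ω | p j ω}.indicator 1 ω ∂P :=
      (lintegral_finsetSum _ fun j _ => measurable_one.indicator (hp j)).symm
    _ = ∫⁻ _, (c : ℝ≥0∞) ∂P := lintegral_congr_ae <| h.mono fun ω hω => by
      simp only [Set.indicator_apply, Set.mem_ofPred_eq, Pi.one_apply, sum_boole, hω]
    _ = c := by simp

section Exchangeable

variable {Ω ι α : Type*} [MeasurableSpace Ω] [Fintype ι] [LinearOrder α] [TopologicalSpace α]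
  [OrderClosedTopology α] [SecondCountableTopology α] [MeasurableSpace α] [OpensMeasurableSpace α]

theorem measurableSet_rank_lt (j : ι) (i : ℕ) : MeasurableSet {v : ι → α | rank v j < i} := by
  have : Measurable fun v : ι → α => rank v j := by
    simp only [rank, card_filter]
    exact Finset.measurable_sum _ fun k _ => Measurable.ite
      (measurableSet_lt (measurable_pi_apply k) (measurable_pi_apply j))
      measurable_const measurable_const
  exact this (measurableSet_Iio (a := i))

theorem measure_rank_lt_eq_of_exchangeable [DecidableEq ι] {P : Measure Ω} {S : ι → Ω → α}
    (hmeas : ∀ j, Measurable (S j))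
    (hexch : ∀ σ : Equiv.Perm ι,
      Measure.map (fun ω => fun j => S (σ j) ω) P = Measure.map (fun ω => fun j => S j ω) P)
    (i : ℕ) (j j' : ι) :
    P {ω | rank (S · ω) j < i} = P {ω | rank (S · ω) j' < i} := by
  have hpre : {ω | rank (S · ω) j < i} =
      (fun ω k => S (Equiv.swap j j' k) ω) ⁻¹' {v | rank v j' < i} := by
    ext ω
    change _ ↔ rank ((S · ω) ∘ Equiv.swap j j') j' < i
    rw [rank_comp_equiv, Equiv.swap_apply_right]
    rfl
  have hB := measurableSet_rank_lt (α := α) j' i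
  rw [hpre, ← Measure.map_apply (measurable_pi_lambda _ fun _ => hmeas _) hB, hexch,
    Measure.map_apply (measurable_pi_lambda _ fun _ => hmeas _) hB]
  rfl

theorem measure_rank_lt_eq_div_card_of_exchangeable [DecidableEq ι] {P : Measure Ω}
    [IsProbabilityMeasure P] {S : ι → Ω → α} (hmeas : ∀ j, Measurable (S j))
    (hexch : ∀ σ : Equiv.Perm ι,
      Measure.map (fun ω => fun j => S (σ j) ω) P = Measure.map (fun ω => fun j => S j ω) P)
    (hinj : ∀ᵐ ω ∂P, (S · ω).Injective) {i : ℕ} (hi : i ≤ Fintype.card ι) (j : ι) :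
    P {ω | rank (S · ω) j < i} = i / Fintype.card ι := by
  have : Nonempty ι := ⟨j⟩
  have hsum : ∑ k, P {ω | rank (S · ω) k < i} = i :=
    sum_measure_eq_of_ae_card_eq
      (fun k => measurable_pi_lambda _ (fun l => hmeas l) (measurableSet_rank_lt k i))
      (hinj.mono fun ω hω => card_filter_rank_lt hω hi)
  rw [sum_congr rfl fun k _ => measure_rank_lt_eq_of_exchangeable hmeas hexch i k j, sum_const,
    card_univ, nsmul_eq_mul] at hsum
  rw [← hsum, mul_comm, ENNReal.mul_div_cancel_right (Nat.cast_ne_zero.mpr Fintype.card_ne_zero)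
    (ENNReal.natCast_ne_top _)]

end Exchangeable

/-- For exchangeable, almost surely pairwise distinct real random variables
`S 0, …, S n`, and `S_(i)` the `i`-th smallest among the first `n` of them, we have
`P(S (last) ≤ S_(i)) = i / (n+1)` for every `i ∈ {1, …, n}`. -/
theorem prob_le_orderStat_of_exchangeable
    {Ω : Type*} [MeasurableSpace Ω] (P : Measure Ω) [IsProbabilityMeasure P]
    (n : ℕ) (S : Fin (n + 1) → Ω → ℝ) (hmeas : ∀ i, Measurable (S i))
    (hexch : ∀ σ : Equiv.Perm (Fin (n + 1)),
      Measure.map (fun ω => fun i => S (σ i) ω) P = Measure.map (fun ω => fun i => S i ω) P)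
    (hdist : ∀ᵐ ω ∂P, ∀ i j : Fin (n + 1), i ≠ j → S i ω ≠ S j ω) :
    ∀ i : ℕ, 1 ≤ i → i ≤ n →
      P {ω | S (Fin.last n) ω ≤ orderStat n (fun j : Fin n => S j.castSucc ω) i}
        = (i : ℝ≥0∞) / (n + 1 : ℝ≥0∞) := by
  intro i hi₁ hi₂
  have hinj : ∀ᵐ ω ∂P, (S · ω).Injective :=
    hdist.mono fun ω hω a b hab => by_contra fun hne => hω a b hne hab
  have hset : {ω | S (Fin.last n) ω ≤ orderStat n (fun j : Fin n => S j.castSucc ω) i} =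
      {ω | rank (S · ω) (Fin.last n) < i} := by
    ext ω
    exact (le_orderStat_iff _ _ hi₁ hi₂).trans (by rw [Set.mem_ofPred_eq, rank_last])
  rw [hset, measure_rank_lt_eq_div_card_of_exchangeable hmeas hexch hinj (by simp; omega),
    Fintype.card_fin, Nat.cast_add_one]
end
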